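/- Fix α > 0 and define f(A,C) = -A(4A³ + 2A²C - 8αA² - 12αAC - 5αC²)/(C²(2A² + αC)) for A, C > 0. Then the zero set {(A,C) : A,C > 0, f(A,C) = 0} is exactly the graph C = h(A) where h(A) = (A/(5α))(A - 6α + √((A - 6α)² + 20α(A - 2α))), h is smooth and strictly increasing where positive, h(2α) = 0, and h has range (0,∞) on (2α, ∞); hence its inverse g = h⁻¹ : (0,∞) → (2α, ∞) is a smooth strictly increasing function with lim_{C→0⁺} g(C) = 2α. -/

import Mathlib

open Set Filter Topology

/-- Right-hand side of the trajectory ODE `dA/dC = f(A,C)` for the RG-2 flow of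
LRS SL(2,ℝ) geometries. -/
noncomputable def fSL (α A C : ℝ) : ℝ :=
  -(A*(4*A^3 + 2*A^2*C - 8*α*A^2 - 12*α*A*C - 5*α*C^2))/(C^2*(2*A^2 + α*C))

/-- The positive root of the quadratic (in `C`) factor of `fSL`. -/
noncomputable def hSL (α A : ℝ) : ℝ :=
  (A/(5*α)) * (A - 6*α + Real.sqrt ((A - 6*α)^2 + 20*α*(A - 2*α)))

private lemma hSL_two (α : ℝ) (hα : 0 < α) : hSL α (2*α) = 0 := by
  unfold hSL
  have h : (2*α - 6*α)^2 + 20*α*(2*α - 2*α) = (4*α)^2 := by ring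
  rw [h, Real.sqrt_sq (by linarith)]
  ring

private lemma hSL_mono (α : ℝ) (hα : 0 < α) : StrictMonoOn (hSL α) (Ici (2*α)) := by
  intro x hx y hy hxy
  simp only [mem_Ici] at hx hy
  have hx0 : 0 < x := by linarith
  have hsxnn : 0 ≤ Real.sqrt ((x - 6*α)^2 + 20*α*(x - 2*α)) := Real.sqrt_nonneg _
  have hle : Real.sqrt ((x - 6*α)^2 + 20*α*(x - 2*α)) ≤
      Real.sqrt ((y - 6*α)^2 + 20*α*(y - 2*α)) := Real.sqrt_le_sqrt (by nlinarith)
  have hgx : 0 ≤ x - 6*α + Real.sqrt ((x - 6*α)^2 + 20*α*(x - 2*α)) := by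
    have h1 : Real.sqrt ((6*α - x)^2) ≤ Real.sqrt ((x - 6*α)^2 + 20*α*(x - 2*α)) :=
      Real.sqrt_le_sqrt (by nlinarith)
    rw [Real.sqrt_sq_eq_abs] at h1
    have := le_abs_self (6*α - x)
    linarith
  have hgy : 0 < y - 6*α + Real.sqrt ((y - 6*α)^2 + 20*α*(y - 2*α)) := by
    have h1 : Real.sqrt ((6*α - y)^2) < Real.sqrt ((y - 6*α)^2 + 20*α*(y - 2*α)) :=
      Real.sqrt_lt_sqrt (sq_nonneg _) (by nlinarith)
    rw [Real.sqrt_sq_eq_abs] at h1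
    have := le_abs_self (6*α - y)
    linarith
  unfold hSL
  rw [div_mul_eq_mul_div, div_mul_eq_mul_div,
    div_lt_div_iff₀ (by linarith : (0:ℝ) < 5*α) (by linarith : (0:ℝ) < 5*α)]
  have step1 : x*(x - 6*α + Real.sqrt ((x - 6*α)^2 + 20*α*(x - 2*α))) ≤
      x*(y - 6*α + Real.sqrt ((y - 6*α)^2 + 20*α*(y - 2*α))) :=
    mul_le_mul_of_nonneg_left (by linarith) hx0.le
  have step2 : x*(y - 6*α + Real.sqrt ((y - 6*α)^2 + 20*α*(y - 2*α))) <
      y*(y - 6*α + Real.sqrt ((y - 6*α)^2 + 20*α*(y - 2*α))) :=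
    mul_lt_mul_of_pos_right hxy hgy
  nlinarith [step1, step2]

private lemma hSL_cont (α : ℝ) : Continuous (hSL α) := by
  unfold hSL
  fun_prop

private lemma hSL_surj (α : ℝ) (hα : 0 < α) :
    ∀ C : ℝ, 0 < C → ∃ A : ℝ, 2*α < A ∧ hSL α A = C := by
  intro C hC
  have hcont : ContinuousOn (hSL α) (Icc (2*α) (6*α + C)) := (hSL_cont α).continuousOn
  have hM : C ≤ hSL α (6*α + C) := by
    unfold hSL
    have hs := Real.sqrt_nonneg ((6*α + C - 6*α)^2 + 20*α*(6*α + C - 2*α))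
    rw [div_mul_eq_mul_div, le_div_iff₀ (by linarith : (0:ℝ) < 5*α)]
    nlinarith
  have hivt := intermediate_value_Icc (by linarith : 2*α ≤ 6*α + C) hcont
  have hmem : C ∈ Icc (hSL α (2*α)) (hSL α (6*α + C)) := by
    rw [hSL_two α hα]; exact ⟨hC.le, hM⟩
  obtain ⟨A, hA, hAeq⟩ := hivt hmem
  refine ⟨A, ?_, hAeq⟩
  rcases eq_or_lt_of_le hA.1 with h | h
  · rw [← h, hSL_two α hα] at hAeq; linarith
  · exact h

private lemma hSL_contDiffAt (α : ℝ) (hα : 0 < α) {x : ℝ} (hx : 2*α < x) :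
    ContDiffAt ℝ (⊤ : ℕ∞) (hSL α) x := by
  have hDpos : 0 < (x - 6*α)^2 + 20*α*(x - 2*α) := by nlinarith
  have h1 : ContDiffAt ℝ (⊤ : ℕ∞) (fun A : ℝ => (A - 6*α)^2 + 20*α*(A - 2*α)) x :=
    (((contDiff_id.sub contDiff_const).pow 2).add
      (contDiff_const.mul (contDiff_id.sub contDiff_const))).contDiffAt
  have h2 : ContDiffAt ℝ (⊤ : ℕ∞) (fun A : ℝ => Real.sqrt ((A - 6*α)^2 + 20*α*(A - 2*α))) x :=
    (Real.contDiffAt_sqrt hDpos.ne').comp x h1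
  have h3 : ContDiffAt ℝ (⊤ : ℕ∞) (fun A : ℝ => A/(5*α)) x := (contDiff_id.div_const _).contDiffAt
  have h4 : ContDiffAt ℝ (⊤ : ℕ∞) (fun A : ℝ => A - 6*α) x := (contDiff_id.sub contDiff_const).contDiffAt
  exact h3.mul (h4.add h2)

private lemma hSL_deriv (α : ℝ) (hα : 0 < α) {x : ℝ} (hx : 2*α < x) :
    ∃ d : ℝ, 0 < d ∧ HasStrictDerivAt (hSL α) d x := by
  have hDpos : 0 < (x - 6*α)^2 + 20*α*(x - 2*α) := by nlinarith
  set s := Real.sqrt ((x - 6*α)^2 + 20*α*(x - 2*α)) with hs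
  have hspos : 0 < s := Real.sqrt_pos.2 hDpos
  have hs2 : s^2 = (x - 6*α)^2 + 20*α*(x - 2*α) := Real.sq_sqrt hDpos.le
  have hid : HasStrictDerivAt (fun A : ℝ => A - 6*α) 1 x := by
    simpa using (hasStrictDerivAt_id x).fun_sub (hasStrictDerivAt_const x (6*α))
  have hid2 : HasStrictDerivAt (fun A : ℝ => A - 2*α) 1 x := by
    simpa using (hasStrictDerivAt_id x).fun_sub (hasStrictDerivAt_const x (2*α))
  have h1 : HasStrictDerivAt (fun A : ℝ => (A - 6*α)^2 + 20*α*(A - 2*α))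
      (2*(x - 6*α) + 20*α) x := by
    have hpow : HasStrictDerivAt (fun A : ℝ => (A - 6*α)^2)
        (((2:ℕ):ℝ) * (x - 6*α)^1 * 1) x := hid.fun_pow 2
    have hlin : HasStrictDerivAt (fun A : ℝ => 20*α*(A - 2*α)) (20*α*1) x :=
      hid2.const_mul (20*α)
    refine (hpow.fun_add hlin).congr_deriv ?_
    push_cast
    ring
  have h2 : HasStrictDerivAt (fun A : ℝ => Real.sqrt ((A - 6*α)^2 + 20*α*(A - 2*α)))
      (1/(2*s) * (2*(x - 6*α) + 20*α)) x :=
    (Real.hasStrictDerivAt_sqrt hDpos.ne').comp x h1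
  have h3 : HasStrictDerivAt (fun A : ℝ => A - 6*α +
      Real.sqrt ((A - 6*α)^2 + 20*α*(A - 2*α)))
      (1 + 1/(2*s) * (2*(x - 6*α) + 20*α)) x := hid.add h2
  have h4 : HasStrictDerivAt (fun A : ℝ => A/(5*α)) (1/(5*α)) x := by
    simpa using (hasStrictDerivAt_id x).div_const (5*α)
  have h5 := h4.mul h3
  refine ⟨_, ?_, h5⟩
  -- positivity of the derivative
  have hgx : 0 < x - 6*α + s := by
    have h6 : Real.sqrt ((6*α - x)^2) < s := Real.sqrt_lt_sqrt (sq_nonneg _) (by nlinarith)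
    rw [Real.sqrt_sq_eq_abs] at h6
    have := le_abs_self (6*α - x)
    linarith
  have hx0 : 0 < x := by linarith
  have hterm : 0 < 1 + 1/(2*s) * (2*(x - 6*α) + 20*α) := by
    have : 0 < 1/(2*s) := by positivity
    nlinarith [this, mul_pos this (by linarith : (0:ℝ) < 2*(x - 6*α) + 20*α)]
  have h7 : 0 < 1/(5*α) := by positivity
  positivity

private lemma hSL_key (α : ℝ) (hα : 0 < α) (A C : ℝ) (hA : 0 < A) (hC : 0 < C) :
    fSL α A C = 0 ↔ C = hSL α A := by
  have hden : C^2*(2*A^2 + α*C) ≠ 0 := by positivity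
  set D := (A - 6*α)^2 + 20*α*(A - 2*α) with hD
  set s := Real.sqrt D with hs
  have hsnn : 0 ≤ s := Real.sqrt_nonneg _
  constructor
  · intro h
    unfold fSL at h
    rw [div_eq_zero_iff] at h
    rcases h with h | h
    swap
    · exact absurd h hden
    rw [neg_eq_zero, mul_eq_zero] at h
    rcases h with h | hQ
    · exact absurd h (ne_of_gt hA)
    have hDnn : 0 ≤ D := by
      nlinarith [sq_nonneg (5*α*C - A*(A - 6*α)), mul_pos hA hA, sq_nonneg A]
    have hs2 : s^2 = D := Real.sq_sqrt hDnn
    have hfac : (5*α*C - A*(A - 6*α) - A*s) * (5*α*C - A*(A - 6*α) + A*s) = 0 := by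
      linear_combination (-(A^2)) * hs2 + (-(A^2)) * hD + (-(5*α)) * hQ
    rcases mul_eq_zero.1 hfac with h | h
    · unfold hSL
      rw [← hD, ← hs]
      field_simp
      linear_combination h
    · exfalso
      have h1 : A*(A - 6*α) = 5*α*C + A*s := by linarith
      have h2 : 0 < A*(A - 6*α) := by
        nlinarith [mul_nonneg hA.le hsnn, mul_pos hα hC]
      have h3 : 0 < A - 6*α := by nlinarith
      have h4 : (0:ℝ) = 25*α^2*C^2 + 10*α*A*C*s + 20*α*A^2*(A - 2*α) := by
        linear_combination (A*(A - 6*α) + 5*α*C + A*s) * h1 + A^2 * hs2 + A^2 * hD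
      nlinarith [mul_nonneg (mul_nonneg (mul_nonneg hα.le hA.le) hC.le) hsnn,
        mul_pos (mul_pos hα (mul_pos hA hA)) (show (0:ℝ) < A - 2*α by linarith),
        mul_pos (mul_pos hα hα) (mul_pos hC hC)]
  · intro h
    have hDnn : 0 ≤ D := by
      by_contra hneg
      push_neg at hneg
      have hs0 : s = 0 := by rw [hs]; exact Real.sqrt_eq_zero'.2 hneg.le
      unfold hSL at h
      rw [← hD, ← hs, hs0] at h
      have h5 : C * (5*α) = A * (A - 6*α + 0) := by
        rw [h]; field_simp
      nlinarith [mul_pos hC (show (0:ℝ) < 5*α by linarith), mul_pos hA hA]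
    have hs2 : s^2 = D := Real.sq_sqrt hDnn
    unfold fSL
    rw [div_eq_zero_iff]
    left
    rw [neg_eq_zero]
    unfold hSL at h
    rw [← hD, ← hs] at h
    rw [h]
    have h5 : (5*α) ≠ 0 := by positivity
    have hkey : A*(4*A^3 + 2*A^2*(A/(5*α)*(A - 6*α + s)) - 8*α*A^2 -
        12*α*A*(A/(5*α)*(A - 6*α + s)) - 5*α*(A/(5*α)*(A - 6*α + s))^2) =
        A^3/(5*α)*(((A - 6*α)^2 + 20*α*(A - 2*α)) - s^2) := by
      field_simp
      ring
    rw [hkey, ← hD, hs2, sub_self, mul_zero]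

/-- For `α > 0`, the zero set of `fSL` in the positive quadrant is exactly the graph
`C = hSL(A)`; `hSL` is smooth and strictly increasing where it is positive
(i.e. for `A ≥ 2α`), `hSL(2α) = 0`, `hSL` maps `(2α, ∞)` onto `(0, ∞)`, and its
inverse `g` is a smooth strictly increasing function on `(0, ∞)` with values
above `2α` and `g(C) → 2α` as `C → 0⁺`. -/
theorem rg2_sl2_level_set
    (α : ℝ) (hα : 0 < α) :
    (∀ A C : ℝ, 0 < A → 0 < C → (fSL α A C = 0 ↔ C = hSL α A)) ∧
    ContDiffOn ℝ (⊤ : ℕ∞) (hSL α) (Ioi (2*α)) ∧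
    StrictMonoOn (hSL α) (Ici (2*α)) ∧
    hSL α (2*α) = 0 ∧
    (∀ C : ℝ, 0 < C → ∃ A : ℝ, 2*α < A ∧ hSL α A = C) ∧
    (∃ g : ℝ → ℝ, StrictMonoOn g (Ioi (0:ℝ)) ∧ ContDiffOn ℝ (⊤ : ℕ∞) g (Ioi (0:ℝ)) ∧
      (∀ C : ℝ, 0 < C → 2*α < g C ∧ hSL α (g C) = C) ∧
      Tendsto g (nhdsWithin 0 (Ioi 0)) (nhds (2*α))) := by
  refine ⟨fun A C hA hC => hSL_key α hα A C hA hC,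
    fun x hx => (hSL_contDiffAt α hα hx).contDiffWithinAt,
    hSL_mono α hα, hSL_two α hα, hSL_surj α hα, ?_⟩
  set g : ℝ → ℝ := fun C => if h : 0 < C then (hSL_surj α hα C h).choose else 2*α with hg
  have hgspec : ∀ C : ℝ, 0 < C → 2*α < g C ∧ hSL α (g C) = C := by
    intro C hC
    have := (hSL_surj α hα C hC).choose_spec
    simp only [hg, dif_pos hC]
    exact this
  have hmono : StrictMonoOn g (Ioi (0:ℝ)) := by
    intro C₁ h₁ C₂ h₂ h₁₂
    simp only [mem_Ioi] at h₁ h₂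
    obtain ⟨ha₁, hb₁⟩ := hgspec C₁ h₁
    obtain ⟨ha₂, hb₂⟩ := hgspec C₂ h₂
    by_contra hcon
    push_neg at hcon
    have := (hSL_mono α hα).monotoneOn (mem_Ici.2 ha₂.le) (mem_Ici.2 ha₁.le) hcon
    rw [hb₁, hb₂] at this
    linarith
  refine ⟨g, hmono, ?_, hgspec, ?_⟩
  · -- smoothness of g
    intro C₀ hC₀
    simp only [mem_Ioi] at hC₀
    obtain ⟨hA₀, hAC⟩ := hgspec C₀ hC₀
    set A₀ := g C₀ with hA₀def
    obtain ⟨d, hdpos, hderiv⟩ := hSL_deriv α hα hA₀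
    have hsm : ContDiffAt ℝ (⊤ : ℕ∞) (hSL α) A₀ := hSL_contDiffAt α hα hA₀
    have hF := hderiv.hasStrictFDerivAt_equiv hdpos.ne'
    have hg' : ∀ᶠ x in 𝓝 A₀, g (hSL α x) = x := by
      filter_upwards [Ioi_mem_nhds hA₀] with x hx
      simp only [mem_Ioi] at hx
      have hpos : 0 < hSL α x := by
        have := hSL_mono α hα (self_mem_Ici) (mem_Ici.2 hx.le) hx
        rw [hSL_two α hα] at this
        exact this
      obtain ⟨hgx1, hgx2⟩ := hgspec (hSL α x) hpos
      exact (hSL_mono α hα).injOn (mem_Ici.2 hgx1.le) (mem_Ici.2 hx.le) hgx2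
    have huniq := hF.localInverse_unique hg'
    have hloc : ContDiffAt ℝ (⊤ : ℕ∞) (hsm.localInverse hF.hasFDerivAt (by simp)) (hSL α A₀) :=
      hsm.to_localInverse hF.hasFDerivAt (by simp)
    have hgood : ContDiffAt ℝ (⊤ : ℕ∞) g (hSL α A₀) := hloc.congr_of_eventuallyEq huniq
    rw [hAC] at hgood
    exact hgood.contDiffWithinAt
  · -- limit
    rw [tendsto_order]
    constructor
    · intro b hb
      filter_upwards [self_mem_nhdsWithin] with C hC
      have := (hgspec C hC).1
      linarith
    · intro b hb
      have hmid : 2*α < (2*α + b)/2 := by linarith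
      have hδ : 0 < hSL α ((2*α + b)/2) := by
        have := hSL_mono α hα (self_mem_Ici) (mem_Ici.2 hmid.le) hmid
        rw [hSL_two α hα] at this
        exact this
      filter_upwards [Ioo_mem_nhdsGT_of_mem (Set.mem_Ico.2 ⟨le_refl (0:ℝ), hδ⟩)] with C hC
      obtain ⟨hC0, hCδ⟩ := hC
      obtain ⟨ha, hb'⟩ := hgspec C hC0
      have : g C < (2*α + b)/2 := by
        by_contra hcon
        push_neg at hcon
        have := (hSL_mono α hα).monotoneOn (mem_Ici.2 hmid.le) (mem_Ici.2 ha.le) hcon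
        rw [hb'] at this
        linarith
      linarith
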